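/- Let R be a commutative ring with 1 and let n ∈ ℕ. If A, B ∈ UT_n(R) are unitriangular matrices with all first-superdiagonal entries equal to 1 (a_{i,i+1} = b_{i,i+1} = 1 for all 1 ≤ i ≤ n−1), then A and B are conjugate in UT_n(R). -/

import Mathlib

/-!
Write `A = 1 + N`. Since `N` is strictly upper triangular with ones on the first superdiagonal,
the first row of `N ^ i` starts with `i` zeros followed by a one, so the matrix `Y` whose `i`-th
row is the first row of `N ^ i` is unitriangular. Shifting rows up gives `S * Y = Y * N` for the
shift matrix `S`, so `Y * A * Y⁻¹ = 1 + S`: every such `A` is conjugate in `UT_n(R)` to the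
Jordan block `1 + S`, hence any two are conjugate to each other.
-/

namespace Matrix

def IsUnitriangular {ι R : Type*} [LT ι] [Zero R] [One R] (M : Matrix ι ι R) : Prop :=
  M.IsUpperTriangular ∧ ∀ i, M i i = 1

section Unitriangular

variable {ι R : Type*} [LinearOrder ι] [Fintype ι]

lemma IsUpperTriangular.mul_apply_self [NonUnitalNonAssocSemiring R] {M N : Matrix ι ι R}
    (hM : M.IsUpperTriangular) (hN : N.IsUpperTriangular) (i : ι) : (M * N) i i = M i i * N i i := by
  rw [mul_apply]
  refine Finset.sum_eq_single i (fun l _ hl => ?_) (by simp)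
  rcases hl.lt_or_gt with h | h
  · rw [hM h, zero_mul]
  · rw [hN h, mul_zero]

namespace IsUnitriangular

lemma mul [Semiring R] {M N : Matrix ι ι R} (hM : M.IsUnitriangular) (hN : N.IsUnitriangular) :
    (M * N).IsUnitriangular :=
  ⟨hM.1.mul hN.1, fun i => by rw [hM.1.mul_apply_self hN.1, hM.2, hN.2, one_mul]⟩

variable [DecidableEq ι] [CommRing R] {M : Matrix ι ι R}

lemma isUnit_det (hM : M.IsUnitriangular) : IsUnit M.det := by
  simp [det_of_isUpperTriangular hM.1, hM.2]

lemma inv (hM : M.IsUnitriangular) : M⁻¹.IsUnitriangular := by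
  have := M.invertibleOfIsUnitDet hM.isUnit_det
  have hinv : M⁻¹.IsUpperTriangular := blockTriangular_inv_of_blockTriangular hM.1
  refine ⟨hinv, fun i => ?_⟩
  have h := congr_fun₂ (M.mul_nonsing_inv hM.isUnit_det) i i
  rwa [hM.1.mul_apply_self hinv, hM.2, one_mul, one_apply_eq] at h

end IsUnitriangular

end Unitriangular

section Superdiagonal

variable {R : Type*} [Semiring R] {n : ℕ}

def upperShift (n : ℕ) : Matrix (Fin n) (Fin n) R :=
  of fun i j => if (j : ℕ) = i + 1 then 1 else 0

lemma upperShift_mul_apply (M : Matrix (Fin n) (Fin n) R) (i j : Fin n) :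
    (upperShift n * M : Matrix (Fin n) (Fin n) R) i j =
      if h : (i : ℕ) + 1 < n then M ⟨i + 1, h⟩ j else 0 := by
  simp only [mul_apply, upperShift, of_apply, ite_mul, one_mul, zero_mul]
  split_ifs with h
  · refine (Finset.sum_eq_single ⟨i + 1, h⟩ (fun l _ hl => if_neg ?_) (by simp)).trans
      (if_pos rfl)
    exact fun hl' => hl (Fin.ext hl')
  · exact Finset.sum_eq_zero fun l _ => if_neg (by omega)

variable {N : Matrix (Fin n) (Fin n) R}

lemma pow_apply_eq_zero_of_lt_add (hN : ∀ i j : Fin n, j ≤ i → N i j = 0) (k : ℕ) {i j : Fin n}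
    (hij : (j : ℕ) < i + k) : (N ^ k) i j = 0 := by
  induction k generalizing i with
  | zero => exact one_apply_ne (by omega)
  | succ k ih =>
    rw [pow_succ', mul_apply]
    refine Finset.sum_eq_zero fun l _ => ?_
    rcases le_or_gt l i with hl | hl
    · rw [hN i l hl, zero_mul]
    · rw [ih (by omega), mul_zero]

lemma pow_apply_eq_one_of_eq_add (hN : ∀ i j : Fin n, j ≤ i → N i j = 0)
    (hN₁ : ∀ i j : Fin n, (j : ℕ) = i + 1 → N i j = 1) (k : ℕ) {i j : Fin n}
    (hij : (j : ℕ) = i + k) : (N ^ k) i j = 1 := by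
  induction k generalizing i with
  | zero =>
    obtain rfl : i = j := Fin.ext (by omega)
    exact one_apply_eq i
  | succ k ih =>
    have hi : (i : ℕ) + 1 < n := by omega
    rw [pow_succ', mul_apply, Finset.sum_eq_single ⟨i + 1, hi⟩, hN₁ _ _ rfl, ih (by simp; omega),
      one_mul]
    · intro l _ hl
      rcases le_or_gt l i with hl' | hl'
      · rw [hN i l hl', zero_mul]
      · have : (i : ℕ) + 1 ≠ l := fun h => hl (Fin.ext h.symm)
        rw [pow_apply_eq_zero_of_lt_add hN k (by omega), mul_zero]
    · simp

def firstRowPowers (N : Matrix (Fin n) (Fin n) R) : Matrix (Fin n) (Fin n) R :=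
  of fun i j => (N ^ (i : ℕ)) ⟨0, i.pos⟩ j

lemma isUnitriangular_firstRowPowers (hN : ∀ i j : Fin n, j ≤ i → N i j = 0)
    (hN₁ : ∀ i j : Fin n, (j : ℕ) = i + 1 → N i j = 1) : (firstRowPowers N).IsUnitriangular :=
  ⟨fun i j hij => pow_apply_eq_zero_of_lt_add hN _ (by simpa using hij),
    fun i => pow_apply_eq_one_of_eq_add hN hN₁ _ (by simp)⟩

lemma upperShift_mul_firstRowPowers (hN : ∀ i j : Fin n, j ≤ i → N i j = 0) :
    upperShift n * firstRowPowers N = firstRowPowers N * N := by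
  ext i j
  have hpow : (firstRowPowers N * N) i j = (N ^ ((i : ℕ) + 1)) ⟨0, i.pos⟩ j := by
    rw [pow_succ, mul_apply, mul_apply]; rfl
  rw [upperShift_mul_apply, hpow]
  split_ifs with h
  · rfl
  · exact (pow_apply_eq_zero_of_lt_add hN _ (by simp; omega)).symm

end Superdiagonal

lemma exists_isUnitriangular_conj_eq_one_add_upperShift {R : Type*} [CommRing R] {n : ℕ}
    {A : Matrix (Fin n) (Fin n) R}
    (hA : A.IsUnitriangular) (hA₁ : ∀ i j : Fin n, (j : ℕ) = i + 1 → A i j = 1) :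
    ∃ Y : Matrix (Fin n) (Fin n) R, Y.IsUnitriangular ∧ A = Y⁻¹ * (1 + upperShift n) * Y := by
  have hN : ∀ i j : Fin n, j ≤ i → (A - 1) i j = 0 := by
    intro i j hji
    rcases hji.lt_or_eq with h | rfl
    · rw [sub_apply, hA.1 h, one_apply_ne h.ne', sub_zero]
    · rw [sub_apply, hA.2, one_apply_eq, sub_self]
  have hN₁ : ∀ i j : Fin n, (j : ℕ) = i + 1 → (A - 1) i j = 1 := by
    intro i j hij
    rw [sub_apply, hA₁ i j hij, one_apply_ne (fun h => by subst h; omega), sub_zero]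
  set Y := firstRowPowers (A - 1)
  have hY := isUnitriangular_firstRowPowers hN hN₁
  have hYA : Y * A = (1 + upperShift n) * Y := by
    rw [add_mul, one_mul, upperShift_mul_firstRowPowers hN, ← mul_one_add, add_sub_cancel]
  refine ⟨Y, hY, ?_⟩
  rw [mul_assoc, ← hYA, ← mul_assoc, nonsing_inv_mul _ hY.isUnit_det, one_mul]

end Matrix

open Matrix

theorem stmt_11 {R : Type*} [CommRing R] (n : ℕ)
    (A B : Matrix (Fin n) (Fin n) R)
    (hAut : A.BlockTriangular id) (hAdiag : ∀ i, A i i = 1)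
    (hBut : B.BlockTriangular id) (hBdiag : ∀ i, B i i = 1)
    (hAsup : ∀ i j : Fin n, j.val = i.val + 1 → A i j = 1)
    (hBsup : ∀ i j : Fin n, j.val = i.val + 1 → B i j = 1) :
    ∃ X : Matrix (Fin n) (Fin n) R,
      X.BlockTriangular id ∧ (∀ i, X i i = 1) ∧ X⁻¹ * A * X = B := by
  obtain ⟨P, hP, rfl⟩ :=
    exists_isUnitriangular_conj_eq_one_add_upperShift ⟨hAut, hAdiag⟩ hAsup
  obtain ⟨Q, hQ, rfl⟩ :=
    exists_isUnitriangular_conj_eq_one_add_upperShift ⟨hBut, hBdiag⟩ hBsup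
  obtain ⟨hXut, hXdiag⟩ := hP.inv.mul hQ
  refine ⟨P⁻¹ * Q, hXut, hXdiag, ?_⟩
  have := P.invertibleOfIsUnitDet hP.isUnit_det
  rw [Matrix.mul_inv_rev, inv_inv_of_invertible]
  simp only [Matrix.mul_assoc, mul_inv_cancel_left_of_invertible]
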